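/- Let K : (0,∞) → ℝ be measurable with r ↦ K(|r|)(1 + |r|²) Lebesgue integrable on ℝ³, and define κ(k) := ∫_{ℝ³} K(|r|) e^{−i k·r} dr for k = |k| (this integral depends only on |k| since K is radial). Then κ is twice continuously differentiable on (0,∞), and for every k ∈ ℝ³ with k ≠ 0 and all μ, ν ∈ {1,2,3}, ∫_{ℝ³} K(|r|) r_μ r_ν e^{−i k·r} dr = −(κ'(|k|)/|k|) δ_{μν} − (κ''(|k|) − κ'(|k|)/|k|) k_μ k_ν / |k|². -/

import Mathlib

open Real MeasureTheory Topology
open scoped RealInnerProductSpace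

noncomputable section Stmt4Aux
namespace Stmt4Aux

abbrev E3 := EuclideanSpace ℝ (Fin 3)

def Jw (K : ℝ → ℝ) (w : E3 → ℂ) (p : E3) : ℂ :=
  ∫ r : E3, ((K ‖r‖ : ℝ) : ℂ) * w r * Complex.exp (-Complex.I * ((⟪p, r⟫ : ℝ) : ℂ))

variable {K : ℝ → ℝ}

lemma expNorm (x : ℝ) : ‖Complex.exp (-Complex.I * (x : ℂ))‖ = 1 := by
  simp [Complex.norm_exp]

lemma boundInt (hK : Measurable K)
    (hint : Integrable (fun r : E3 => K ‖r‖ * (1 + ‖r‖ ^ 2))) :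
    Integrable (fun r : E3 => |K ‖r‖| * (2 * (1 + ‖r‖ ^ 2))) := by
  have h1 : Integrable (fun r : E3 => |K ‖r‖ * (1 + ‖r‖ ^ 2)|) := hint.abs
  have h2 := h1.const_mul 2
  apply h2.congr
  filter_upwards with r
  rw [abs_mul, abs_of_pos (by positivity : (0:ℝ) < 1 + ‖r‖ ^ 2)]
  ring

lemma measAux (hK : Measurable K) {w : E3 → ℂ} (hw : Measurable w) (p : E3) :
    AEStronglyMeasurable
      (fun r : E3 => ((K ‖r‖ : ℝ) : ℂ) * w r * Complex.exp (-Complex.I * ((⟪p, r⟫ : ℝ) : ℂ)))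
      volume := by
  apply Measurable.aestronglyMeasurable
  refine ((Complex.measurable_ofReal.comp (hK.comp measurable_norm)).mul hw).mul ?_
  have hc : Continuous fun r : E3 => Complex.exp (-Complex.I * ((⟪p, r⟫ : ℝ) : ℂ)) :=
    Complex.continuous_exp.comp
      ((continuous_const.mul (Complex.continuous_ofReal.comp
        (continuous_const.inner continuous_id))))
  exact hc.measurable

lemma JwInt (hK : Measurable K)
    (hint : Integrable (fun r : E3 => K ‖r‖ * (1 + ‖r‖ ^ 2)))
    {w : E3 → ℂ} (hw : Measurable w) (hb : ∀ r : E3, ‖w r‖ ≤ 2 * (1 + ‖r‖ ^ 2)) (p : E3) :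
    Integrable
      (fun r : E3 => ((K ‖r‖ : ℝ) : ℂ) * w r * Complex.exp (-Complex.I * ((⟪p, r⟫ : ℝ) : ℂ))) := by
  refine (boundInt hK hint).mono' (measAux hK hw p) ?_
  filter_upwards with r
  rw [norm_mul, norm_mul, expNorm, mul_one, Complex.norm_real, Real.norm_eq_abs]
  exact mul_le_mul_of_nonneg_left (hb r) (abs_nonneg _)


lemma inner_line (p v : E3) (t : ℝ) (r : E3) :
    ((⟪p + t • v, r⟫ : ℝ) : ℂ) = ((⟪p, r⟫ : ℝ) : ℂ) + (t : ℂ) * ((⟪v, r⟫ : ℝ) : ℂ) := by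
  rw [inner_add_left, real_inner_smul_left]; push_cast; ring

lemma expDeriv (b a : ℂ) (t : ℝ) :
    HasDerivAt (fun t : ℝ => Complex.exp (-Complex.I * (a + t * b)))
      (Complex.exp (-Complex.I * (a + t * b)) * (-Complex.I * b)) t := by
  have h0 : HasDerivAt (fun t : ℝ => (t : ℂ)) 1 t := by
    exact Complex.ofRealCLM.hasDerivAt
  have h1 := (((h0.mul_const b).const_add a).const_mul (-Complex.I)).cexp
  convert h1 using 1
  ring

lemma keyDeriv (hK : Measurable K)
    (hint : Integrable (fun r : E3 => K ‖r‖ * (1 + ‖r‖ ^ 2)))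
    {w : E3 → ℂ} (hw : Measurable w) (hb : ∀ r : E3, ‖w r‖ ≤ 1 + ‖r‖)
    (p v : E3) (hv : ‖v‖ ≤ 1) (t₀ : ℝ) :
    HasDerivAt (fun t : ℝ => Jw K w (p + t • v))
      (Jw K (fun r => w r * (-Complex.I * ((⟪v, r⟫ : ℝ) : ℂ))) (p + t₀ • v)) t₀ := by
  have hb2 : ∀ r : E3, ‖w r‖ ≤ 2 * (1 + ‖r‖ ^ 2) := fun r => by
    have := hb r; nlinarith [norm_nonneg r, sq_nonneg (‖r‖ - 1)]
  set w' : E3 → ℂ := fun r => w r * (-Complex.I * ((⟪v, r⟫ : ℝ) : ℂ)) with hw'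
  have hw'm : Measurable w' := by
    apply hw.mul
    apply Measurable.const_mul
    exact (Complex.continuous_ofReal.comp (continuous_const.inner continuous_id)).measurable
  have hnw' : ∀ r : E3, ‖w' r‖ ≤ 2 * (1 + ‖r‖ ^ 2) := by
    intro r
    have h1 : ‖w' r‖ = ‖w r‖ * |(⟪v, r⟫ : ℝ)| := by
      rw [hw', norm_mul, norm_mul, norm_neg, Complex.norm_I, one_mul, Complex.norm_real,
        Real.norm_eq_abs]
    have h2 : |(⟪v, r⟫ : ℝ)| ≤ ‖r‖ := by
      have := abs_real_inner_le_norm v r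
      nlinarith [norm_nonneg r]
    have h3 := hb r
    have h4 : ‖w r‖ * |(⟪v, r⟫ : ℝ)| ≤ (1 + ‖r‖) * ‖r‖ := by
      apply mul_le_mul h3 h2 (abs_nonneg _) (by positivity)
    rw [h1]
    nlinarith [norm_nonneg r, sq_nonneg (‖r‖ - 1)]
  have key := hasDerivAt_integral_of_dominated_loc_of_deriv_le
    (F := fun t (r : E3) =>
      ((K ‖r‖ : ℝ) : ℂ) * w r * Complex.exp (-Complex.I * ((⟪p + t • v, r⟫ : ℝ) : ℂ)))
    (F' := fun t (r : E3) =>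
      ((K ‖r‖ : ℝ) : ℂ) * w' r * Complex.exp (-Complex.I * ((⟪p + t • v, r⟫ : ℝ) : ℂ)))
    (x₀ := t₀) (bound := fun r : E3 => |K ‖r‖| * (2 * (1 + ‖r‖ ^ 2)))
    (s := Metric.ball t₀ 1) (Metric.ball_mem_nhds t₀ one_pos)
    (Filter.Eventually.of_forall fun t => measAux hK hw _)
    (JwInt hK hint hw hb2 _)
    (measAux hK hw'm _)
    (Filter.Eventually.of_forall fun r => ?_)
    (boundInt hK hint)
    (Filter.Eventually.of_forall fun r => ?_)
  · exact key.2
  · intro x _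
    rw [norm_mul, norm_mul, expNorm, mul_one, Complex.norm_real, Real.norm_eq_abs]
    exact mul_le_mul_of_nonneg_left (hnw' r) (abs_nonneg _)
  · intro x _
    have hfun : (fun t : ℝ =>
        ((K ‖r‖ : ℝ) : ℂ) * w r * Complex.exp (-Complex.I * ((⟪p + t • v, r⟫ : ℝ) : ℂ)))
        = fun t : ℝ => ((K ‖r‖ : ℝ) : ℂ) * w r *
            Complex.exp (-Complex.I * (((⟪p, r⟫ : ℝ) : ℂ) + t * ((⟪v, r⟫ : ℝ) : ℂ))) := by
      funext t; rw [inner_line]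
    rw [hfun]
    have h1 := (expDeriv ((⟪v, r⟫ : ℝ) : ℂ) ((⟪p, r⟫ : ℝ) : ℂ) x).const_mul
      (((K ‖r‖ : ℝ) : ℂ) * w r)
    show HasDerivAt _
      (((K ‖r‖ : ℝ) : ℂ) * w' r * Complex.exp (-Complex.I * ((⟪p + x • v, r⟫ : ℝ) : ℂ))) x
    refine h1.congr_deriv ?_
    rw [inner_line, hw']
    ring


lemma keyCont (hK : Measurable K)
    (hint : Integrable (fun r : E3 => K ‖r‖ * (1 + ‖r‖ ^ 2)))
    {w : E3 → ℂ} (hw : Measurable w) (hb : ∀ r : E3, ‖w r‖ ≤ 2 * (1 + ‖r‖ ^ 2))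
    (p v : E3) : Continuous fun t : ℝ => Jw K w (p + t • v) := by
  apply continuous_of_dominated (bound := fun r : E3 => |K ‖r‖| * (2 * (1 + ‖r‖ ^ 2)))
    (fun t => measAux hK hw _) ?_ (boundInt hK hint) ?_
  · intro t
    filter_upwards with r
    rw [norm_mul, norm_mul, expNorm, mul_one, Complex.norm_real, Real.norm_eq_abs]
    exact mul_le_mul_of_nonneg_left (hb r) (abs_nonneg _)
  · filter_upwards with r
    have hfun : (fun t : ℝ =>
        ((K ‖r‖ : ℝ) : ℂ) * w r * Complex.exp (-Complex.I * ((⟪p + t • v, r⟫ : ℝ) : ℂ)))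
        = fun t : ℝ => ((K ‖r‖ : ℝ) : ℂ) * w r *
            Complex.exp (-Complex.I * (((⟪p, r⟫ : ℝ) : ℂ) + t * ((⟪v, r⟫ : ℝ) : ℂ))) := by
      funext t; rw [inner_line]
    rw [hfun]
    apply Continuous.mul continuous_const
    apply Complex.continuous_exp.comp
    apply Continuous.mul continuous_const
    exact continuous_const.add (Complex.continuous_ofReal.mul continuous_const)

lemma norm_line (p v : E3) (hv : ‖v‖ = 1) (t : ℝ) :
    ‖p + t • v‖ = Real.sqrt (‖p‖ ^ 2 + 2 * (⟪p, v⟫ : ℝ) * t + t ^ 2) := by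
  rw [show ‖p + t • v‖ = Real.sqrt (‖p + t • v‖ ^ 2) from (Real.sqrt_sq (norm_nonneg _)).symm]
  congr 1
  rw [norm_add_sq_real, real_inner_smul_right, norm_smul, hv]
  simp [mul_pow, sq_abs]
  ring

lemma sqrtline_deriv (p v : E3) (hp : p ≠ 0) :
    HasDerivAt (fun t : ℝ => Real.sqrt (‖p‖ ^ 2 + 2 * (⟪p, v⟫ : ℝ) * t + t ^ 2))
      ((⟪p, v⟫ : ℝ) / ‖p‖) 0 := by
  have hp' : ‖p‖ ≠ 0 := norm_ne_zero_iff.mpr hp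
  have h1 : HasDerivAt (fun t : ℝ => ‖p‖ ^ 2 + 2 * (⟪p, v⟫ : ℝ) * t + t ^ 2)
      (2 * (⟪p, v⟫ : ℝ)) 0 := by
    have := (((hasDerivAt_id (0:ℝ)).const_mul (2 * (⟪p, v⟫ : ℝ))).const_add (‖p‖ ^ 2)).add
      (hasDerivAt_pow 2 (0:ℝ))
    exact this.congr_deriv (by simp)
  have h2 : (‖p‖ ^ 2 + 2 * (⟪p, v⟫ : ℝ) * 0 + 0 ^ 2) ≠ 0 := by
    simp [pow_eq_zero_iff, hp']
  have h3 := (Real.hasDerivAt_sqrt h2).comp 0 h1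
  have h4 : Real.sqrt (‖p‖ ^ 2 + 2 * (⟪p, v⟫ : ℝ) * 0 + 0 ^ 2) = ‖p‖ := by
    simp [Real.sqrt_sq (norm_nonneg p)]
  rw [Function.comp_def] at h3
  refine h3.congr_deriv ?_
  rw [h4]
  field_simp


lemma kappa_eq (hK : Measurable K) {κ : ℝ → ℂ}
    (hκ : ∀ t : ℝ, κ t = ∫ r : E3,
      ((K ‖r‖ : ℝ) : ℂ) * Complex.exp (-Complex.I * ((t * r 0 : ℝ) : ℂ))) :
    ∀ t : ℝ, κ t = Jw K (fun _ => 1) ((0 : E3) + t • EuclideanSpace.single (0 : Fin 3) (1 : ℝ)) := by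
  intro t
  rw [hκ t]
  unfold Jw
  congr 1
  funext r
  have h1 : (⟪(0 : E3) + t • EuclideanSpace.single (0 : Fin 3) (1 : ℝ), r⟫ : ℝ) = t * r 0 := by
    rw [zero_add, real_inner_smul_left, EuclideanSpace.inner_single_left]
    simp
  rw [h1, mul_one]

lemma radial (hK : Measurable K) {κ : ℝ → ℂ}
    (hκ : ∀ t : ℝ, κ t = ∫ r : E3,
      ((K ‖r‖ : ℝ) : ℂ) * Complex.exp (-Complex.I * ((t * r 0 : ℝ) : ℂ))) :
    ∀ p : E3, Jw K (fun _ => 1) p = κ ‖p‖ := by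
  intro p
  have hgen := kappa_eq hK hκ
  rcases eq_or_ne p 0 with hp | hp
  · have := hgen 0
    simp only [zero_smul, add_zero] at this
    rw [hp, norm_zero, this]
  · have hpn : ‖p‖ ≠ 0 := norm_ne_zero_iff.mpr hp
    set u : E3 := ‖p‖⁻¹ • p with hu_def
    have hu : ‖u‖ = 1 := by
      rw [hu_def, norm_smul, Real.norm_eq_abs, abs_of_nonneg (by positivity)]
      field_simp
    have horth : Orthonormal ℝ (({0} : Set (Fin 3)).restrict fun _ : Fin 3 => u) := by
      constructor
      · intro i; exact hu
      · intro i j hij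
        exfalso
        apply hij
        apply Subtype.ext
        have hi := i.2
        have hj := j.2
        simp only [Set.mem_singleton_iff] at hi hj
        rw [hi, hj]
    have hcard : Module.finrank ℝ E3 = Fintype.card (Fin 3) := by simp
    obtain ⟨b, hb⟩ := horth.exists_orthonormalBasis_extension_of_card_eq hcard
    have hb0 : b 0 = u := hb 0 rfl
    set A := b.repr.symm with hA_def
    have hA : MeasurePreserving A volume volume := A.measurePreserving
    have hemb : MeasurableEmbedding A := A.toHomeomorph.measurableEmbedding
    have hAsingle : A (EuclideanSpace.single (0 : Fin 3) (1 : ℝ)) = u := by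
      rw [hA_def, OrthonormalBasis.repr_symm_single]
      simp [hb0]
    have hinteg : ∀ x : EuclideanSpace ℝ (Fin 3),
        ((K ‖A x‖ : ℝ) : ℂ) * 1 * Complex.exp (-Complex.I * ((⟪p, A x⟫ : ℝ) : ℂ))
          = ((K ‖x‖ : ℝ) : ℂ) * Complex.exp (-Complex.I * ((‖p‖ * x 0 : ℝ) : ℂ)) := by
      intro x
      have hn : ‖A x‖ = ‖x‖ := A.norm_map x
      have hpu : p = ‖p‖ • u := by rw [hu_def, smul_inv_smul₀ hpn]
      have hin : (⟪p, A x⟫ : ℝ) = ‖p‖ * x 0 := by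
        conv_lhs => rw [hpu]
        rw [real_inner_smul_left, ← hAsingle, LinearIsometryEquiv.inner_map_map,
          EuclideanSpace.inner_single_left]
        simp
      rw [hn, hin, mul_one]
    calc Jw K (fun _ => 1) p
        = ∫ x : EuclideanSpace ℝ (Fin 3),
            ((K ‖A x‖ : ℝ) : ℂ) * 1 * Complex.exp (-Complex.I * ((⟪p, A x⟫ : ℝ) : ℂ)) := by
          unfold Jw
          exact (hA.integral_comp hemb fun r : E3 =>
            ((K ‖r‖ : ℝ) : ℂ) * 1 * Complex.exp (-Complex.I * ((⟪p, r⟫ : ℝ) : ℂ))).symm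
      _ = ∫ x : EuclideanSpace ℝ (Fin 3),
            ((K ‖x‖ : ℝ) : ℂ) * Complex.exp (-Complex.I * ((‖p‖ * x 0 : ℝ) : ℂ)) := by
          congr 1; funext x; exact hinteg x
      _ = κ ‖p‖ := (hκ ‖p‖).symm


lemma gradLine (hK : Measurable K)
    (hint : Integrable (fun r : E3 => K ‖r‖ * (1 + ‖r‖ ^ 2)))
    {κ : ℝ → ℂ} (hrad : ∀ p : E3, Jw K (fun _ => 1) p = κ ‖p‖)
    (hκd : ∀ x : ℝ, DifferentiableAt ℝ κ x) (p v : E3) (hp : p ≠ 0) (hv : ‖v‖ = 1) :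
    Jw K (fun r => (1 : ℂ) * (-Complex.I * ((⟪v, r⟫ : ℝ) : ℂ))) p
      = deriv κ ‖p‖ * (((⟪p, v⟫ / ‖p‖ : ℝ) : ℂ)) := by
  have h1 : HasDerivAt (fun s : ℝ => Jw K (fun _ => (1 : ℂ)) (p + s • v))
      (Jw K (fun r => (1 : ℂ) * (-Complex.I * ((⟪v, r⟫ : ℝ) : ℂ))) (p + (0 : ℝ) • v)) 0 :=
    keyDeriv hK hint measurable_const
      (fun r => by rw [norm_one]; linarith [norm_nonneg r]) p v (le_of_eq hv) 0
  rw [show p + (0 : ℝ) • v = p by simp] at h1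
  have heq : (fun s : ℝ => Jw K (fun _ => (1 : ℂ)) (p + s • v))
      = fun s => κ (Real.sqrt (‖p‖ ^ 2 + 2 * (⟪p, v⟫ : ℝ) * s + s ^ 2)) := by
    funext s; rw [hrad, norm_line p v hv]
  rw [heq] at h1
  have hs := sqrtline_deriv p v hp
  have hsq0 : Real.sqrt (‖p‖ ^ 2 + 2 * (⟪p, v⟫ : ℝ) * 0 + 0 ^ 2) = ‖p‖ := by
    simp [Real.sqrt_sq (norm_nonneg p)]
  have hκ' : HasDerivAt κ (deriv κ ‖p‖)
      (Real.sqrt (‖p‖ ^ 2 + 2 * (⟪p, v⟫ : ℝ) * 0 + 0 ^ 2)) := by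
    rw [hsq0]; exact (hκd ‖p‖).hasDerivAt
  have h2 : HasDerivAt (fun s : ℝ => κ (Real.sqrt (‖p‖ ^ 2 + 2 * (⟪p, v⟫ : ℝ) * s + s ^ 2)))
      (((⟪p, v⟫ : ℝ) / ‖p‖) • deriv κ ‖p‖) 0 := by
    have h3 := HasDerivAt.scomp (x := (0 : ℝ)) hκ' hs
    exact h3
  have h4 := h1.unique h2
  rw [h4, Complex.real_smul, mul_comm]


lemma smoothAll (hK : Measurable K)
    (hint : Integrable (fun r : E3 => K ‖r‖ * (1 + ‖r‖ ^ 2)))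
    {κ : ℝ → ℂ}
    (hκ : ∀ t : ℝ, κ t = ∫ r : E3,
      ((K ‖r‖ : ℝ) : ℂ) * Complex.exp (-Complex.I * ((t * r 0 : ℝ) : ℂ))) :
    ContDiff ℝ 2 κ ∧ (∀ x : ℝ, HasDerivAt κ (deriv κ x) x) ∧
      (∀ x : ℝ, HasDerivAt (deriv κ) (deriv (deriv κ) x) x) := by
  set e0 : E3 := EuclideanSpace.single (0 : Fin 3) (1 : ℝ) with he0_def
  have he0 : ‖e0‖ = 1 := by rw [he0_def, EuclideanSpace.norm_single]; norm_num
  have minner : Measurable fun r : E3 => ((⟪e0, r⟫ : ℝ) : ℂ) :=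
    (Complex.continuous_ofReal.comp (continuous_const.inner continuous_id)).measurable
  have hinner_le : ∀ r : E3, |(⟪e0, r⟫ : ℝ)| ≤ ‖r‖ := fun r => by
    have := abs_real_inner_le_norm e0 r
    rwa [he0, one_mul] at this
  set w1 : E3 → ℂ := fun r => (1 : ℂ) * (-Complex.I * ((⟪e0, r⟫ : ℝ) : ℂ)) with hw1_def
  have hw1m : Measurable w1 := measurable_const.mul (minner.const_mul (-Complex.I))
  have hw1n : ∀ r : E3, ‖w1 r‖ = |(⟪e0, r⟫ : ℝ)| := fun r => by
    rw [hw1_def]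
    simp only [norm_mul, norm_one, one_mul, norm_neg, Complex.norm_I, Complex.norm_real,
      Real.norm_eq_abs]
  have hw1b : ∀ r : E3, ‖w1 r‖ ≤ 1 + ‖r‖ := fun r => by
    rw [hw1n]; have := hinner_le r; linarith [norm_nonneg r]
  have hd1 : ∀ t : ℝ, HasDerivAt κ (Jw K w1 ((0 : E3) + t • e0)) t := by
    intro t
    have h := keyDeriv hK hint (measurable_const : Measurable fun _ : E3 => (1 : ℂ))
      (fun r => by rw [norm_one]; linarith [norm_nonneg r]) 0 e0 (le_of_eq he0) t
    exact h.congr_of_eventuallyEq (Filter.Eventually.of_forall (kappa_eq hK hκ))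
  have hder1 : deriv κ = fun t => Jw K w1 ((0 : E3) + t • e0) := funext fun t => (hd1 t).deriv
  set w2 : E3 → ℂ := fun r => w1 r * (-Complex.I * ((⟪e0, r⟫ : ℝ) : ℂ)) with hw2_def
  have hw2m : Measurable w2 := hw1m.mul (minner.const_mul (-Complex.I))
  have hd2' : ∀ t : ℝ, HasDerivAt (fun t => Jw K w1 ((0 : E3) + t • e0))
      (Jw K w2 ((0 : E3) + t • e0)) t := fun t =>
    keyDeriv hK hint hw1m hw1b 0 e0 (le_of_eq he0) t
  have hd2 : ∀ t : ℝ, HasDerivAt (deriv κ) (Jw K w2 ((0 : E3) + t • e0)) t := by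
    intro t; rw [hder1]; exact hd2' t
  have hder2 : deriv (deriv κ) = fun t => Jw K w2 ((0 : E3) + t • e0) :=
    funext fun t => (hd2 t).deriv
  have hw2b : ∀ r : E3, ‖w2 r‖ ≤ 2 * (1 + ‖r‖ ^ 2) := fun r => by
    rw [hw2_def]
    simp only [norm_mul, norm_neg, Complex.norm_I, one_mul, Complex.norm_real, Real.norm_eq_abs]
    rw [hw1n]
    have h := hinner_le r
    have h0 := abs_nonneg (⟪e0, r⟫ : ℝ)
    nlinarith [norm_nonneg r, sq_nonneg (‖r‖ - 1)]
  have hcont2 : Continuous fun t => Jw K w2 ((0 : E3) + t • e0) :=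
    keyCont hK hint hw2m hw2b 0 e0
  have hCD : ContDiff ℝ 2 κ := by
    rw [show (2 : WithTop ℕ∞) = 1 + 1 from rfl, contDiff_succ_iff_deriv]
    refine ⟨fun t => (hd1 t).differentiableAt, by simp, ?_⟩
    rw [contDiff_one_iff_deriv]
    refine ⟨fun t => (hd2 t).differentiableAt, ?_⟩
    rw [hder2]
    exact hcont2
  refine ⟨hCD, fun x => ?_, fun x => ?_⟩
  · rw [(hd1 x).deriv]; exact hd1 x
  · rw [(hd2 x).deriv]; exact hd2 x


lemma prod_weight (a b : ℂ) : (1 : ℂ) * (-Complex.I * a) * (-Complex.I * b) = -(a * b) := by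
  have h := Complex.I_mul_I
  ring_nf
  rw [Complex.I_sq]
  ring

end Stmt4Aux


/-- For an integrable radial kernel `K(|r|)` on `ℝ³` (with second
moments), its radial Fourier transform `κ` is twice continuously differentiable on
`(0,∞)`, and the Fourier transform of the tensor kernel `K(|r|) r_μ r_ν` is
`-(κ'(|k|)/|k|) δ_{μν} - (κ''(|k|) - κ'(|k|)/|k|) k_μ k_ν / |k|²`. -/
theorem stmt_4 (K : ℝ → ℝ) (hK : Measurable K)
    (hint : Integrable (fun r : EuclideanSpace ℝ (Fin 3) => K ‖r‖ * (1 + ‖r‖ ^ 2)))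
    (κ : ℝ → ℂ)
    (hκ : ∀ t : ℝ, κ t = ∫ r : EuclideanSpace ℝ (Fin 3),
        ((K ‖r‖ : ℝ) : ℂ) * Complex.exp (-Complex.I * ((t * r 0 : ℝ) : ℂ))) :
    ContDiffOn ℝ 2 κ (Set.Ioi 0) ∧
      ∀ k : EuclideanSpace ℝ (Fin 3), k ≠ 0 → ∀ μ ν : Fin 3,
        (∫ r : EuclideanSpace ℝ (Fin 3),
            ((K ‖r‖ * r μ * r ν : ℝ) : ℂ) * Complex.exp (-Complex.I * ((⟪k, r⟫ : ℝ) : ℂ))) =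
          -(deriv κ ‖k‖ / ((‖k‖ : ℝ) : ℂ)) * (if μ = ν then 1 else 0) -
            (deriv (deriv κ) ‖k‖ - deriv κ ‖k‖ / ((‖k‖ : ℝ) : ℂ)) *
              (((k μ * k ν / ‖k‖ ^ 2 : ℝ) : ℂ)) := by
  open Stmt4Aux in
  obtain ⟨hCD, hd1, hdd⟩ := smoothAll hK hint hκ
  have hrad := Stmt4Aux.radial hK hκ
  refine ⟨hCD.contDiffOn, ?_⟩
  intro k hk μ ν
  have hknz : ‖k‖ ≠ 0 := norm_ne_zero_iff.mpr hk
  have hip : ∀ (i : Fin 3) (r : Stmt4Aux.E3),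
      (⟪EuclideanSpace.single i (1 : ℝ), r⟫ : ℝ) = r i := by
    intro i r
    rw [EuclideanSpace.inner_single_left]
    simp
  have hnorm_single : ∀ i : Fin 3, ‖EuclideanSpace.single i (1 : ℝ)‖ = 1 := fun i => by
    rw [EuclideanSpace.norm_single]; norm_num
  set eμ : Stmt4Aux.E3 := EuclideanSpace.single μ (1 : ℝ) with heμ_def
  set eν : Stmt4Aux.E3 := EuclideanSpace.single ν (1 : ℝ) with heν_def
  set δ : ℝ := if μ = ν then 1 else 0 with hδ_def
  have hδeq : (⟪eν, eμ⟫ : ℝ) = δ := by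
    rw [heν_def, hip ν (EuclideanSpace.single μ (1 : ℝ)), hδ_def]
    by_cases h : μ = ν <;> simp [heμ_def, EuclideanSpace.single_apply, h]
  have hδt : ∀ t : ℝ, (⟪k + t • eν, eμ⟫ : ℝ) = k μ + t * δ := by
    intro t
    rw [inner_add_left, real_inner_smul_left, hδeq, real_inner_comm eμ k, heμ_def, hip]
  have hkν : (⟪k, eν⟫ : ℝ) = k ν := by
    rw [real_inner_comm, heν_def, hip]
  -- weights
  set w1μ : Stmt4Aux.E3 → ℂ := fun r => (1 : ℂ) * (-Complex.I * ((⟪eμ, r⟫ : ℝ) : ℂ)) with hw1μ_def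
  have minnerμ : Measurable fun r : Stmt4Aux.E3 => ((⟪eμ, r⟫ : ℝ) : ℂ) :=
    (Complex.continuous_ofReal.comp (continuous_const.inner continuous_id)).measurable
  have hw1μm : Measurable w1μ := measurable_const.mul (minnerμ.const_mul (-Complex.I))
  have hw1μb : ∀ r : Stmt4Aux.E3, ‖w1μ r‖ ≤ 1 + ‖r‖ := fun r => by
    rw [hw1μ_def]
    simp only [norm_mul, norm_one, one_mul, norm_neg, Complex.norm_I, Complex.norm_real,
      Real.norm_eq_abs]
    have := abs_real_inner_le_norm eμ r
    rw [hnorm_single μ, one_mul] at this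
    linarith [norm_nonneg r]
  -- derivative of G via parametric integral
  have hG := Stmt4Aux.keyDeriv hK hint hw1μm hw1μb k eν (le_of_eq (hnorm_single ν)) 0
  rw [show k + (0 : ℝ) • eν = k by simp] at hG
  -- explicit formula near 0
  set n : ℝ → ℝ := fun t => Real.sqrt (‖k‖ ^ 2 + 2 * (⟪k, eν⟫ : ℝ) * t + t ^ 2) with hn_def
  have hn : ∀ t : ℝ, ‖k + t • eν‖ = n t := fun t =>
    Stmt4Aux.norm_line k eν (hnorm_single ν) t
  have n0 : n 0 = ‖k‖ := by
    rw [hn_def]; simp [Real.sqrt_sq (norm_nonneg k)]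
  have hn' : HasDerivAt n ((⟪k, eν⟫ : ℝ) / ‖k‖) 0 := Stmt4Aux.sqrtline_deriv k eν hk
  have hne : ∀ᶠ t in 𝓝 (0 : ℝ), k + t • eν ≠ 0 := by
    have hc : Continuous fun t : ℝ => k + t • eν :=
      continuous_const.add (continuous_id.smul continuous_const)
    exact hc.continuousAt.eventually_ne (by simpa using hk)
  have heqG : (fun t : ℝ => Stmt4Aux.Jw K w1μ (k + t • eν)) =ᶠ[𝓝 0]
      fun t => deriv κ (n t) * (((k μ + t * δ) / n t : ℝ) : ℂ) := by
    filter_upwards [hne] with t ht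
    have h := Stmt4Aux.gradLine hK hint hrad (fun x => (hd1 x).differentiableAt)
      (k + t • eν) eμ ht (hnorm_single μ)
    rw [hδt t, hn t] at h
    exact h
  -- derivative of explicit formula
  have hsplit : (fun t : ℝ => deriv κ (n t) * (((k μ + t * δ) / n t : ℝ) : ℂ))
      = fun t => deriv κ (n t) * (((k μ + t * δ : ℝ) : ℂ) * ((((n t)⁻¹ : ℝ)) : ℂ)) := by
    funext t; push_cast; ring
  have hF1 : HasDerivAt (fun t => deriv κ (n t))
      ((((⟪k, eν⟫ : ℝ) / ‖k‖)) • deriv (deriv κ) ‖k‖) 0 := by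
    have hdd' : HasDerivAt (deriv κ) (deriv (deriv κ) ‖k‖) (n 0) := by
      rw [n0]; exact hdd ‖k‖
    have := HasDerivAt.scomp (x := (0 : ℝ)) hdd' hn'
    exact this
  have hF2 : HasDerivAt (fun t : ℝ => ((k μ + t * δ : ℝ) : ℂ)) ((δ : ℝ) : ℂ) 0 := by
    have h : HasDerivAt (fun t : ℝ => k μ + t * δ) δ 0 := by
      simpa using ((hasDerivAt_id (0 : ℝ)).mul_const δ).const_add (k μ)
    exact h.ofReal_comp
  have hn0ne : n 0 ≠ 0 := by rw [n0]; exact hknz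
  have hF3 : HasDerivAt (fun t : ℝ => ((((n t)⁻¹ : ℝ)) : ℂ))
      ((( -((⟪k, eν⟫ : ℝ) / ‖k‖) / n 0 ^ 2 : ℝ)) : ℂ) 0 := (hn'.inv hn0ne).ofReal_comp
  have hh := hF1.mul (hF2.mul hF3)
  simp only [Pi.mul_def] at hh
  rw [← hsplit] at hh
  have hGh := hh.congr_of_eventuallyEq heqG
  have hval := hG.unique hGh
  -- left-hand side equals -Jw
  have hLHS : (∫ r : EuclideanSpace ℝ (Fin 3),
      ((K ‖r‖ * r μ * r ν : ℝ) : ℂ) * Complex.exp (-Complex.I * ((⟪k, r⟫ : ℝ) : ℂ)))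
      = - Stmt4Aux.Jw K (fun r => w1μ r * (-Complex.I * ((⟪eν, r⟫ : ℝ) : ℂ))) k := by
    rw [show Stmt4Aux.Jw K (fun r => w1μ r * (-Complex.I * ((⟪eν, r⟫ : ℝ) : ℂ))) k
      = ∫ r : Stmt4Aux.E3, ((K ‖r‖ : ℝ) : ℂ) * (w1μ r * (-Complex.I * ((⟪eν, r⟫ : ℝ) : ℂ)))
        * Complex.exp (-Complex.I * ((⟪k, r⟫ : ℝ) : ℂ)) from rfl]
    rw [← integral_neg]
    congr 1
    funext r
    rw [hw1μ_def]
    simp only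
    rw [heμ_def, heν_def, hip μ r, hip ν r, Stmt4Aux.prod_weight]
    push_cast
    ring
  rw [hLHS, hval]
  -- final algebra
  simp only [n0, hkν, zero_mul, add_zero, mul_zero]
  rw [Complex.real_smul]
  have hif : ((δ : ℝ) : ℂ) = if μ = ν then (1 : ℂ) else 0 := by
    rw [hδ_def]; by_cases h : μ = ν <;> simp [h]
  rw [← hif]
  have hknzC : ((‖k‖ : ℝ) : ℂ) ≠ 0 := by exact_mod_cast hknz
  push_cast
  field_simp [hknzC]
  ring
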